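/- For the Bolthausen–Sznitman coalescent, the series Σ_{b≥2} 1/μ(b) = Σ_{b≥2} 1/(b(H_b − 1)) diverges; hence the Bolthausen–Sznitman coalescent does not come down from infinity. -/

import Mathlib

/-- The b-th harmonic number H_b = Σ_{j=1}^b 1/j. -/
noncomputable def harmonic' (b : ℕ) : ℝ := ∑ j ∈ Finset.Icc 1 b, (1 : ℝ) / j

/-!
If `a n > 0` and `a n → ∞`, then `log (a (n+1)) - log (a n) ≤ (a (n+1) - a n) / a n`, so the
partial sums of `(a (n+1) - a n) / a n` dominate `log (a n) - log (a 0) → ∞`. Applied to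
`a b = H_{b+2} - 1`, whose increments are `1 / (b + 3) ≤ 1 / (b + 2)`, this shows that
`1 / ((b + 2) (H_{b+2} - 1))` is not summable.
-/

open Filter Real

theorem not_summable_sub_div_self_of_tendsto_atTop {a : ℕ → ℝ} (ha : ∀ n, 0 < a n)
    (h : Tendsto a atTop atTop) : ¬ Summable fun n => (a (n + 1) - a n) / a n := by
  intro hs
  have log_step_le : ∀ n, log (a (n + 1)) - log (a n) ≤ (a (n + 1) - a n) / a n := by
    intro n
    rw [← log_div (ha _).ne' (ha n).ne', sub_div, div_self (ha n).ne']
    exact log_le_sub_one_of_pos (div_pos (ha _) (ha n))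
  have partial_sums_tendsto :
      Tendsto (fun n => ∑ i ∈ Finset.range n, (a (i + 1) - a i) / a i) atTop atTop := by
    refine tendsto_atTop_mono (fun n => ?_)
      (tendsto_atTop_add_const_right _ (-log (a 0)) (tendsto_log_atTop.comp h))
    rw [Function.comp_apply, ← sub_eq_add_neg, ← Finset.sum_range_sub fun i => log (a i)]
    exact Finset.sum_le_sum fun i _ => log_step_le i
  exact not_tendsto_atTop_of_tendsto_nhds hs.hasSum.tendsto_sum_nat partial_sums_tendsto

theorem harmonic'_eq_harmonic (n : ℕ) : harmonic' n = harmonic n := by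
  simp [harmonic', harmonic_eq_sum_Icc]

theorem harmonic'_succ_sub (n : ℕ) : harmonic' (n + 1) - harmonic' n = 1 / (n + 1) := by
  simp [harmonic'_eq_harmonic, harmonic_succ]

theorem one_lt_harmonic' {n : ℕ} (hn : 2 ≤ n) : 1 < harmonic' n := by
  induction n, hn using Nat.le_induction with
  | base => norm_num [harmonic'_eq_harmonic, harmonic_succ]
  | succ n _ ih => linarith [harmonic'_succ_sub n, show (0 : ℝ) < 1 / (n + 1) by positivity]

theorem tendsto_harmonic'_atTop : Tendsto harmonic' atTop atTop := by
  refine tendsto_atTop_mono (fun n => ?_) (tendsto_log_atTop.comp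
    (tendsto_atTop_add_const_right _ 1 tendsto_natCast_atTop_atTop))
  simpa [harmonic'_eq_harmonic] using log_add_one_le_harmonic n

/-- For the Bolthausen–Sznitman coalescent, Σ_{b≥2} 1/μ(b) = Σ_{b≥2} 1/(b(H_b - 1))
diverges: the coalescent does not come down from infinity. -/
theorem bolthausen_sznitman_not_cdi :
    ¬ Summable (fun b : ℕ => 1 / (((b : ℝ) + 2) * (harmonic' (b + 2) - 1))) := by
  set G : ℕ → ℝ := fun b => harmonic' (b + 2) - 1
  have G_pos : ∀ b, 0 < G b := fun b => sub_pos.2 (one_lt_harmonic' (by omega))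
  have G_tendsto : Tendsto G atTop atTop :=
    tendsto_atTop_add_const_right _ _ (tendsto_harmonic'_atTop.comp (tendsto_add_atTop_nat 2))
  have G_step : ∀ b, G (b + 1) - G b = 1 / ((b : ℝ) + 3) := fun b => by
    have := harmonic'_succ_sub (b + 2)
    push_cast at this
    simp only [G, sub_sub_sub_cancel_right, this]
    ring
  intro hs
  refine not_summable_sub_div_self_of_tendsto_atTop G_pos G_tendsto
    (hs.of_nonneg_of_le (fun b => ?_) fun b => ?_)
  · rw [G_step]
    exact div_nonneg (by positivity) (G_pos b).le
  · rw [G_step, div_div, one_div_le_one_div (by positivity [G_pos b]) (by positivity [G_pos b])]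
    exact mul_le_mul_of_nonneg_right (by linarith) (G_pos b).le
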